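/- Let q : ℝ^{2d} → ℂ be a quadratic form with Hamilton map F such that Re q(X) ≥ 0 for all X and with trivial singular space S = {0}. Fix X ∈ ℝ^{2d} \ {0} and let k = k(X) be the smallest nonnegative integer with (Re F)∘(Im F)^k X ≠ 0 (which exists and satisfies k ≤ 2d−1). Then Re q((Im F)^k X) > 0, and there exists a constant C > 0, depending only on k, ‖Re F‖ and ‖Im F‖, such that for all |t| ≤ 1: |Re q(exp(t·Im F)X) − (t^{2k}/(k!)²)·Re q((Im F)^k X)| ≤ C‖X‖² |t|^{2k+1}. -/

import Mathlib

open Matrix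

noncomputable section

/-- The standard symplectic matrix `J = [[0, -I], [I, 0]]` on `R^d ⊕ R^d`. -/
def Jmat (d : ℕ) (R : Type*) [Ring R] :
    Matrix (Fin d ⊕ Fin d) (Fin d ⊕ Fin d) R :=
  Matrix.fromBlocks 0 (-1) 1 0

/-- The complex quadratic form `X ↦ ⟨X, A X⟩` evaluated on a real vector `X ∈ ℝ^{2d}`. -/
def Qc {d : ℕ} (A : Matrix (Fin d ⊕ Fin d) (Fin d ⊕ Fin d) ℂ)
    (X : Fin d ⊕ Fin d → ℝ) : ℂ :=
  (fun i => (X i : ℂ)) ⬝ᵥ A *ᵥ (fun i => (X i : ℂ))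

/-!
Write `B = Im F`. Since `Re F = -J Re A` with `J` invertible, `Re F` and `Re A` have the same
kernel, and `Re A` is positive semidefinite, so `⟨v, Re A v⟩ = 0` forces `Re A v = 0`; applied to
`v = B^k X` this gives `Re q(B^k X) > 0`. For the estimate, split the Taylor expansion of
`exp(tB) Y` into the terms of order `< k`, which lie in `ker Re A` and so drop out of `Re q`, the
order-`k` term `s`, and a remainder `r = O(|t|^{k+1} ‖Y‖)`; then
`Re q(s + r) - Re q(s) = ⟨2s + r, Re A r⟩ = O(|t|^{2k+1} ‖Y‖²)`.
-/

open NormedSpace Finset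
open scoped Nat

lemma re_Qc {d : ℕ} (A : Matrix (Fin d ⊕ Fin d) (Fin d ⊕ Fin d) ℂ) (X : Fin d ⊕ Fin d → ℝ) :
    (Qc A X).re = X ⬝ᵥ A.map Complex.re *ᵥ X := by
  simp [Qc, dotProduct, mulVec, Complex.re_sum, Complex.mul_re]

lemma Jmat_map_ofReal (d : ℕ) : (Jmat d ℝ).map ((↑) : ℝ → ℂ) = Jmat d ℂ := by
  simp [Jmat, fromBlocks_map, Matrix.map_one, Matrix.map_neg]

lemma Jmat_mul_self (d : ℕ) (R : Type*) [Ring R] : Jmat d R * Jmat d R = -1 := by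
  simp [Jmat, fromBlocks_multiply, ← fromBlocks_one, fromBlocks_neg]

lemma map_re_ofReal_mul {ι : Type*} [Fintype ι] (M : Matrix ι ι ℝ) (A : Matrix ι ι ℂ) :
    (M.map ((↑) : ℝ → ℂ) * A).map Complex.re = M * A.map Complex.re := by
  ext i j
  simp [mul_apply, Complex.re_sum]

lemma map_re_neg_Jmat_mul {d : ℕ} (A : Matrix (Fin d ⊕ Fin d) (Fin d ⊕ Fin d) ℂ) :
    (-Jmat d ℂ * A).map Complex.re = -Jmat d ℝ * A.map Complex.re := by
  rw [← Jmat_map_ofReal, ← Matrix.map_neg _ Complex.ofReal_neg, map_re_ofReal_mul]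

lemma neg_Jmat_mul_mulVec_eq_zero_iff {d : ℕ} {R : Type*} [CommRing R]
    (M : Matrix (Fin d ⊕ Fin d) (Fin d ⊕ Fin d) R) (v : Fin d ⊕ Fin d → R) :
    (-Jmat d R * M) *ᵥ v = 0 ↔ M *ᵥ v = 0 := by
  have hJ : Jmat d R * (-Jmat d R * M) = M := by
    rw [Matrix.neg_mul, Matrix.mul_neg, ← Matrix.mul_assoc, Jmat_mul_self, Matrix.neg_mul,
      neg_neg, Matrix.one_mul]
  refine ⟨fun h ↦ ?_, fun h ↦ ?_⟩
  · rw [← hJ, ← mulVec_mulVec, h, mulVec_zero]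
  · rw [← mulVec_mulVec, h, mulVec_zero]

namespace Matrix.IsSymm

variable {ι R : Type*} [Fintype ι] [CommRing R] {M : Matrix ι ι R}

lemma dotProduct_mulVec_comm (hM : M.IsSymm) (u v : ι → R) :
    u ⬝ᵥ M *ᵥ v = v ⬝ᵥ M *ᵥ u := by
  rw [dotProduct_mulVec, ← mulVec_transpose, hM.eq, dotProduct_comm]

lemma dotProduct_mulVec_add_of_mulVec_eq_zero (hM : M.IsSymm) {p : ι → R} (hp : M *ᵥ p = 0)
    (u : ι → R) : (p + u) ⬝ᵥ M *ᵥ (p + u) = u ⬝ᵥ M *ᵥ u := by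
  rw [mulVec_add, hp, zero_add, add_dotProduct, hM.dotProduct_mulVec_comm p, hp,
    dotProduct_zero, zero_add]

lemma dotProduct_mulVec_add_sub (hM : M.IsSymm) (s r : ι → R) :
    (s + r) ⬝ᵥ M *ᵥ (s + r) - s ⬝ᵥ M *ᵥ s = (2 • s + r) ⬝ᵥ M *ᵥ r := by
  simp only [mulVec_add, dotProduct_add, add_dotProduct, smul_dotProduct,
    hM.dotProduct_mulVec_comm r s]
  rw [two_nsmul]
  ring

end Matrix.IsSymm

lemma norm_exp_sub_sum_range_le {𝔸 : Type*} [NormedRing 𝔸] [NormedAlgebra ℝ 𝔸]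
    [CompleteSpace 𝔸] (x : 𝔸) {N : ℕ} (hN : 0 < N) :
    ‖exp x - ∑ n ∈ range N, (n !⁻¹ : ℝ) • x ^ n‖ ≤ ‖x‖ ^ N * Real.exp ‖x‖ := by
  have htail : exp x - ∑ n ∈ range N, (n !⁻¹ : ℝ) • x ^ n
      = ∑' i, ((i + N) !⁻¹ : ℝ) • x ^ (i + N) := by
    rw [exp_eq_tsum ℝ]
    dsimp only
    rw [← (expSeries_summable' x).sum_add_tsum_nat_add N, add_sub_cancel_left]
  have hterm (i : ℕ) : ‖((i + N) !⁻¹ : ℝ) • x ^ (i + N)‖ ≤ ‖x‖ ^ N * (‖x‖ ^ i / i !) := by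
    rw [norm_smul, norm_inv, Real.norm_natCast]
    calc ((i + N) ! : ℝ)⁻¹ * ‖x ^ (i + N)‖ ≤ (i ! : ℝ)⁻¹ * ‖x‖ ^ (i + N) := by
          gcongr
          · exact Nat.le_add_right i N
          · exact norm_pow_le' x (by omega)
      _ = ‖x‖ ^ N * (‖x‖ ^ i / i !) := by ring
  have hsum : Summable fun i ↦ ‖x‖ ^ N * (‖x‖ ^ i / i !) :=
    (Real.summable_pow_div_factorial ‖x‖).mul_left _
  have hsum' := hsum.of_nonneg_of_le (fun _ ↦ norm_nonneg _) hterm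
  calc ‖exp x - ∑ n ∈ range N, (n !⁻¹ : ℝ) • x ^ n‖
      ≤ ∑' i, ‖((i + N) !⁻¹ : ℝ) • x ^ (i + N)‖ := htail ▸ norm_tsum_le_tsum_norm hsum'
    _ ≤ ∑' i, ‖x‖ ^ N * (‖x‖ ^ i / i !) := hsum'.tsum_le_tsum hterm hsum
    _ = ‖x‖ ^ N * Real.exp ‖x‖ := by
        rw [tsum_mul_left, Real.exp_eq_exp_ℝ, exp_eq_tsum_div]

section SupNorm

variable {ι : Type*} [Fintype ι]

lemma abs_dotProduct_le (u v : ι → ℝ) : |u ⬝ᵥ v| ≤ Fintype.card ι * ‖u‖ * ‖v‖ :=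
  calc |u ⬝ᵥ v| ≤ ∑ i, |u i| * |v i| := by
        simpa only [dotProduct, abs_mul] using Finset.abs_sum_le_sum_abs (fun i ↦ u i * v i) univ
    _ ≤ ∑ _i : ι, ‖u‖ * ‖v‖ := by
        gcongr with i
        exacts [norm_le_pi_norm u i, norm_le_pi_norm v i]
    _ = Fintype.card ι * ‖u‖ * ‖v‖ := by simp [mul_assoc]

lemma sq_norm_le_dotProduct_self (v : ι → ℝ) : ‖v‖ ^ 2 ≤ v ⬝ᵥ v := by
  have hv : 0 ≤ v ⬝ᵥ v := Finset.sum_nonneg fun i _ ↦ mul_self_nonneg (v i)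
  refine (Real.le_sqrt (norm_nonneg v) hv).1 <| (pi_norm_le_iff_of_nonneg (Real.sqrt_nonneg _)).2
    fun i ↦ Real.abs_le_sqrt ?_
  rw [sq]
  exact Finset.single_le_sum (f := fun j ↦ v j * v j) (fun j _ ↦ mul_self_nonneg (v j))
    (Finset.mem_univ i)

variable [DecidableEq ι]

attribute [local instance] Matrix.linftyOpNormedRing Matrix.linftyOpNormedAlgebra

lemma abs_dotProduct_mulVec_le (M : Matrix ι ι ℝ) (u v : ι → ℝ) :
    |u ⬝ᵥ M *ᵥ v| ≤ Fintype.card ι * ‖M‖ * ‖u‖ * ‖v‖ :=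
  calc |u ⬝ᵥ M *ᵥ v| ≤ Fintype.card ι * ‖u‖ * ‖M *ᵥ v‖ := abs_dotProduct_le _ _
    _ ≤ Fintype.card ι * ‖u‖ * (‖M‖ * ‖v‖) := by gcongr; exact linfty_opNorm_mulVec M v
    _ = Fintype.card ι * ‖M‖ * ‖u‖ * ‖v‖ := by ring

lemma norm_pow_mulVec_le (B : Matrix ι ι ℝ) (n : ℕ) (v : ι → ℝ) :
    ‖B ^ n *ᵥ v‖ ≤ ‖B‖ ^ n * ‖v‖ := by
  induction n generalizing v with
  | zero => simp
  | succ n ih =>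
    calc ‖B ^ (n + 1) *ᵥ v‖ = ‖B ^ n *ᵥ B *ᵥ v‖ := by rw [pow_succ, mulVec_mulVec]
      _ ≤ ‖B‖ ^ n * (‖B‖ * ‖v‖) := by
          grw [ih, linfty_opNorm_mulVec]
      _ = ‖B‖ ^ (n + 1) * ‖v‖ := by ring

variable {B : Matrix ι ι ℝ} {t : ℝ}

lemma norm_exp_series_term_mulVec_le (n : ℕ) (v : ι → ℝ) :
    ‖(t ^ n / n !) • (B ^ n *ᵥ v)‖ ≤ Real.exp ‖B‖ * ‖v‖ * |t| ^ n :=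
  calc ‖(t ^ n / n !) • (B ^ n *ᵥ v)‖ ≤ |t| ^ n / n ! * (‖B‖ ^ n * ‖v‖) := by
        rw [norm_smul, Real.norm_eq_abs, abs_div, abs_pow, Nat.abs_cast]
        gcongr
        exact norm_pow_mulVec_le B n v
    _ = ‖B‖ ^ n / n ! * ‖v‖ * |t| ^ n := by ring
    _ ≤ Real.exp ‖B‖ * ‖v‖ * |t| ^ n := by
        gcongr
        exact Real.pow_div_factorial_le_exp _ (norm_nonneg B) n

lemma sum_range_smul_pow_mulVec (N : ℕ) (v : ι → ℝ) :
    (∑ n ∈ range N, (n !⁻¹ : ℝ) • (t • B) ^ n) *ᵥ v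
      = ∑ n ∈ range N, (t ^ n / n !) • (B ^ n *ᵥ v) := by
  rw [sum_mulVec]
  refine Finset.sum_congr rfl fun n _ ↦ ?_
  rw [smul_pow, smul_smul, smul_mulVec, div_eq_inv_mul]

lemma norm_exp_smul_sub_sum_mulVec_le (ht : |t| ≤ 1) (N : ℕ) (v : ι → ℝ) :
    ‖(exp (t • B) - ∑ n ∈ range (N + 1), (n !⁻¹ : ℝ) • (t • B) ^ n) *ᵥ v‖
      ≤ ‖B‖ ^ (N + 1) * Real.exp ‖B‖ * ‖v‖ * |t| ^ (N + 1) :=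
  calc _ ≤ ‖exp (t • B) - ∑ n ∈ range (N + 1), (n !⁻¹ : ℝ) • (t • B) ^ n‖ * ‖v‖ :=
        linfty_opNorm_mulVec _ _
    _ ≤ (|t| * ‖B‖) ^ (N + 1) * Real.exp (|t| * ‖B‖) * ‖v‖ := by
        have h := norm_exp_sub_sum_range_le (t • B) (N := N + 1) N.succ_pos
        rw [norm_smul, Real.norm_eq_abs] at h
        gcongr
        exact h
    _ ≤ (|t| * ‖B‖) ^ (N + 1) * Real.exp ‖B‖ * ‖v‖ := by
        gcongr
        exact mul_le_of_le_one_left (norm_nonneg B) ht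
    _ = ‖B‖ ^ (N + 1) * Real.exp ‖B‖ * ‖v‖ * |t| ^ (N + 1) := by ring

variable {M : Matrix ι ι ℝ}

lemma Matrix.IsSymm.abs_dotProduct_mulVec_exp_smul_sub_le (hM : M.IsSymm) {k : ℕ} {v : ι → ℝ}
    (hv : ∀ j < k, M *ᵥ (B ^ j *ᵥ v) = 0) (ht : |t| ≤ 1) :
    |(NormedSpace.exp (t • B) *ᵥ v) ⬝ᵥ M *ᵥ (NormedSpace.exp (t • B) *ᵥ v)
        - t ^ (2 * k) / (k ! : ℝ) ^ 2 * ((B ^ k *ᵥ v) ⬝ᵥ M *ᵥ (B ^ k *ᵥ v))|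
      ≤ Fintype.card ι * ‖M‖ * (2 * Real.exp ‖B‖ + ‖B‖ ^ (k + 1) * Real.exp ‖B‖)
          * (‖B‖ ^ (k + 1) * Real.exp ‖B‖) * ‖v‖ ^ 2 * |t| ^ (2 * k + 1) := by
  set p := ∑ n ∈ range k, (t ^ n / n !) • (B ^ n *ᵥ v)
  set s := (t ^ k / k !) • (B ^ k *ᵥ v)
  set r := (NormedSpace.exp (t • B) - ∑ n ∈ range (k + 1), (n !⁻¹ : ℝ) • (t • B) ^ n) *ᵥ v
  have hdecomp : NormedSpace.exp (t • B) *ᵥ v = p + (s + r) := by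
    simp only [p, s, r]
    rw [sub_mulVec, sum_range_smul_pow_mulVec, sum_range_succ]
    abel
  have hp : M *ᵥ p = 0 := by
    rw [mulVec_sum]
    exact Finset.sum_eq_zero fun n hn ↦ by rw [mulVec_smul, hv n (mem_range.1 hn), smul_zero]
  have hs : s ⬝ᵥ M *ᵥ s = t ^ (2 * k) / (k ! : ℝ) ^ 2 * ((B ^ k *ᵥ v) ⬝ᵥ M *ᵥ (B ^ k *ᵥ v)) := by
    rw [mulVec_smul, smul_dotProduct, dotProduct_smul, smul_eq_mul, smul_eq_mul]
    ring
  have hr : ‖r‖ ≤ ‖B‖ ^ (k + 1) * Real.exp ‖B‖ * ‖v‖ * |t| ^ (k + 1) :=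
    norm_exp_smul_sub_sum_mulVec_le ht k v
  have hsr : ‖2 • s + r‖ ≤ (2 * Real.exp ‖B‖ + ‖B‖ ^ (k + 1) * Real.exp ‖B‖) * ‖v‖ * |t| ^ k :=
    calc ‖2 • s + r‖ ≤ 2 * ‖s‖ + ‖r‖ := (norm_add_le _ _).trans (by grw [norm_nsmul_le]; simp)
      _ ≤ 2 * (Real.exp ‖B‖ * ‖v‖ * |t| ^ k)
            + ‖B‖ ^ (k + 1) * Real.exp ‖B‖ * ‖v‖ * |t| ^ k := by
          grw [norm_exp_series_term_mulVec_le, hr,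
            pow_le_pow_of_le_one (abs_nonneg t) ht k.le_succ]
      _ = (2 * Real.exp ‖B‖ + ‖B‖ ^ (k + 1) * Real.exp ‖B‖) * ‖v‖ * |t| ^ k := by ring
  rw [hdecomp, hM.dotProduct_mulVec_add_of_mulVec_eq_zero hp, ← hs, hM.dotProduct_mulVec_add_sub]
  calc |(2 • s + r) ⬝ᵥ M *ᵥ r| ≤ Fintype.card ι * ‖M‖ * ‖2 • s + r‖ * ‖r‖ :=
        abs_dotProduct_mulVec_le _ _ _
    _ ≤ Fintype.card ι * ‖M‖ * ((2 * Real.exp ‖B‖ + ‖B‖ ^ (k + 1) * Real.exp ‖B‖) * ‖v‖ * |t| ^ k)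
          * (‖B‖ ^ (k + 1) * Real.exp ‖B‖ * ‖v‖ * |t| ^ (k + 1)) := by gcongr
    _ = _ := by ring

lemma Matrix.IsSymm.exists_abs_dotProduct_mulVec_exp_smul_sub_le (hM : M.IsSymm)
    (B : Matrix ι ι ℝ) (k : ℕ) :
    ∃ C : ℝ, 0 < C ∧ ∀ v : ι → ℝ, (∀ j < k, M *ᵥ (B ^ j *ᵥ v) = 0) → ∀ t : ℝ, |t| ≤ 1 →
      |(NormedSpace.exp (t • B) *ᵥ v) ⬝ᵥ M *ᵥ (NormedSpace.exp (t • B) *ᵥ v)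
          - t ^ (2 * k) / (k ! : ℝ) ^ 2 * ((B ^ k *ᵥ v) ⬝ᵥ M *ᵥ (B ^ k *ᵥ v))|
        ≤ C * (v ⬝ᵥ v) * |t| ^ (2 * k + 1) := by
  set C₀ := Fintype.card ι * ‖M‖ * (2 * Real.exp ‖B‖ + ‖B‖ ^ (k + 1) * Real.exp ‖B‖)
    * (‖B‖ ^ (k + 1) * Real.exp ‖B‖)
  refine ⟨C₀ + 1, by positivity, fun v hv t ht ↦ ?_⟩
  have hvv : 0 ≤ v ⬝ᵥ v := (sq_nonneg _).trans (sq_norm_le_dotProduct_self v)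
  calc _ ≤ C₀ * ‖v‖ ^ 2 * |t| ^ (2 * k + 1) := hM.abs_dotProduct_mulVec_exp_smul_sub_le hv ht
    _ ≤ (C₀ + 1) * (v ⬝ᵥ v) * |t| ^ (2 * k + 1) := by
        grw [sq_norm_le_dotProduct_self v]
        gcongr
        linarith

end SupNorm

theorem statement2_general (d : ℕ)
    (A F : Matrix (Fin d ⊕ Fin d) (Fin d ⊕ Fin d) ℂ)
    (hA : A.IsSymm)
    (hF : F = -(Jmat d ℂ) * A)
    (hpos : ∀ X : Fin d ⊕ Fin d → ℝ, 0 ≤ (Qc A X).re)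
    (hS : ∀ X : Fin d ⊕ Fin d → ℝ,
      (∀ k : ℕ, k ≤ 2 * d - 1 →
        (F.map Complex.re * (F.map Complex.im) ^ k) *ᵥ X = 0) → X = 0)
    (X : Fin d ⊕ Fin d → ℝ) (hX : X ≠ 0) :
    ∃ k : ℕ,
      (∀ j : ℕ, j < k → (F.map Complex.re * (F.map Complex.im) ^ j) *ᵥ X = 0) ∧
      (F.map Complex.re * (F.map Complex.im) ^ k) *ᵥ X ≠ 0 ∧
      k ≤ 2 * d - 1 ∧
      0 < (Qc A ((F.map Complex.im) ^ k *ᵥ X)).re ∧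
      ∃ C : ℝ, 0 < C ∧
        ∀ Y : Fin d ⊕ Fin d → ℝ,
          (∀ j : ℕ, j < k → (F.map Complex.re * (F.map Complex.im) ^ j) *ᵥ Y = 0) →
          ∀ t : ℝ, |t| ≤ 1 →
            |(Qc A (NormedSpace.exp (t • F.map Complex.im) *ᵥ Y)).re -
                t ^ (2 * k) / ((k.factorial : ℝ)) ^ 2 *
                  (Qc A ((F.map Complex.im) ^ k *ᵥ Y)).re|
              ≤ C * (Y ⬝ᵥ Y) * |t| ^ (2 * k + 1) := by
  set ReA := A.map Complex.re
  set B := F.map Complex.im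
  have hReF (j : ℕ) (v) : (F.map Complex.re * B ^ j) *ᵥ v = 0 ↔ ReA *ᵥ (B ^ j *ᵥ v) = 0 := by
    rw [← mulVec_mulVec, hF, map_re_neg_Jmat_mul, neg_Jmat_mul_mulVec_eq_zero_iff]
  have hReA : ReA.PosSemidef := .of_dotProduct_mulVec_nonneg
    (isHermitian_iff_isSymm.2 (hA.map _)) fun v ↦ by
      rw [star_trivial, ← re_Qc]
      exact hpos v
  obtain ⟨n, hn, hnX⟩ : ∃ n ≤ 2 * d - 1, (F.map Complex.re * B ^ n) *ᵥ X ≠ 0 := by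
    by_contra! h
    exact hX (hS X h)
  have hex : ∃ n, (F.map Complex.re * B ^ n) *ᵥ X ≠ 0 := ⟨n, hnX⟩
  refine ⟨Nat.find hex, fun j hj ↦ not_not.1 (Nat.find_min hex hj), Nat.find_spec hex,
    (Nat.find_le hnX).trans hn, ?_, ?_⟩
  · rw [re_Qc]
    refine (hReA.dotProduct_mulVec_nonneg _).lt_of_ne fun h ↦ Nat.find_spec hex ?_
    rw [star_trivial] at h
    exact (hReF _ X).2 ((hReA.dotProduct_mulVec_zero_iff _).1 h.symm)
  · obtain ⟨C, hC, hbound⟩ := (hA.map Complex.re).exists_abs_dotProduct_mulVec_exp_smul_sub_le B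
      (Nat.find hex)
    refine ⟨C, hC, fun Y hY t ht ↦ ?_⟩
    simpa only [re_Qc] using hbound Y (fun j hj ↦ (hReF j Y).1 (hY j hj)) t ht

/-- Let `q(X) = ⟨X, A X⟩` with Hamilton map `F = -J A`, `Re q ≥ 0` and
trivial singular space.  For `X ≠ 0` there is a smallest `k` (necessarily `k ≤ 2d - 1`)
with `(Re F)(Im F)^k X ≠ 0`; then `Re q((Im F)^k X) > 0` and there is `C > 0`, depending
only on `k`, `‖Re F‖`, `‖Im F‖` (in particular uniform in the vector), such that for
`|t| ≤ 1` one has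
`|Re q(exp(t Im F) X) - (t^{2k}/(k!)²) Re q((Im F)^k X)| ≤ C ‖X‖² |t|^{2k+1}`. -/
theorem statement2 (d : ℕ) (hd : 0 < d)
    (A F : Matrix (Fin d ⊕ Fin d) (Fin d ⊕ Fin d) ℂ)
    (hA : A.IsSymm)
    (hF : F = -(Jmat d ℂ) * A)
    (hpos : ∀ X : Fin d ⊕ Fin d → ℝ, 0 ≤ (Qc A X).re)
    (hS : ∀ X : Fin d ⊕ Fin d → ℝ,
      (∀ k : ℕ, k ≤ 2 * d - 1 →
        (F.map Complex.re * (F.map Complex.im) ^ k) *ᵥ X = 0) → X = 0)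
    (X : Fin d ⊕ Fin d → ℝ) (hX : X ≠ 0) :
    ∃ k : ℕ,
      (∀ j : ℕ, j < k → (F.map Complex.re * (F.map Complex.im) ^ j) *ᵥ X = 0) ∧
      (F.map Complex.re * (F.map Complex.im) ^ k) *ᵥ X ≠ 0 ∧
      k ≤ 2 * d - 1 ∧
      0 < (Qc A ((F.map Complex.im) ^ k *ᵥ X)).re ∧
      ∃ C : ℝ, 0 < C ∧
        ∀ Y : Fin d ⊕ Fin d → ℝ,
          (∀ j : ℕ, j < k → (F.map Complex.re * (F.map Complex.im) ^ j) *ᵥ Y = 0) →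
          ∀ t : ℝ, |t| ≤ 1 →
            |(Qc A (NormedSpace.exp (t • F.map Complex.im) *ᵥ Y)).re -
                t ^ (2 * k) / ((k.factorial : ℝ)) ^ 2 *
                  (Qc A ((F.map Complex.im) ^ k *ᵥ Y)).re|
              ≤ C * (Y ⬝ᵥ Y) * |t| ^ (2 * k + 1) :=
  statement2_general d A F hA hF hpos hS X hX
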